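/- For an infinite (2k+1)-diagonal matrix C with entries bounded by K, and any l ≥ 1, one has |Tr((C_{n×n})^l) − Tr((C^l)_{n×n})| ≤ k(l-1)·(2kl+1)^l·K^l for every n; in particular (1/n)|Tr((C_{n×n})^l) − Tr((C^l)_{n×n})| → 0. -/

import Mathlib

/-!
A power of a `(2k+1)`-diagonal matrix is again banded, with band width `k l` for the `l`-th power
and entries at most `((2k+1) K) ^ l`. Truncation only affects the entries of `(C_{n×n}) ^ l` whose
row is within `k (l - 1)` of the cut-off `n`, so the two traces differ in at most `k (l - 1)`
diagonal terms, each at most `2 ((2k+1) K) ^ l` in absolute value; the stated constant follows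
from `2 (2k+1) ^ l ≤ (2kl+1) ^ l` whenever `k (l - 1) ≠ 0`.
-/

open scoped BigOperators

noncomputable def matMul (C D : ℕ → ℕ → ℝ) : ℕ → ℕ → ℝ := fun i j => ∑' p, C i p * D p j

noncomputable def matPow (C : ℕ → ℕ → ℝ) : ℕ → ℕ → ℕ → ℝ
  | 0 => fun i j => if i = j then (1 : ℝ) else 0
  | l + 1 => matMul (matPow C l) C

def trunc (C : ℕ → ℕ → ℝ) (n : ℕ) : ℕ → ℕ → ℝ :=
  fun i j => if i < n ∧ j < n then C i j else 0

noncomputable def tr (A : ℕ → ℕ → ℝ) (n : ℕ) : ℝ := ∑ i ∈ Finset.range n, A i i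

open Finset

def IsBanded (k : ℕ) (C : ℕ → ℕ → ℝ) : Prop :=
  ∀ i j : ℕ, (k : ℤ) < |(i : ℤ) - (j : ℤ)| → C i j = 0

namespace IsBanded

variable {a b k : ℕ} {C D : ℕ → ℕ → ℝ}

theorem matMul (hC : IsBanded a C) (hD : IsBanded b D) : IsBanded (a + b) (matMul C D) := by
  intro i j hij
  have hterm : ∀ p, C i p * D p j = 0 := by
    intro p
    rcases le_or_gt |(i : ℤ) - p| a with hip | hip
    · have hpj : (b : ℤ) < |(p : ℤ) - j| := by
        have := abs_sub_le (i : ℤ) p j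
        push_cast at hij
        linarith
      rw [hD p j hpj, mul_zero]
    · rw [hC i p hip, zero_mul]
  simp only [_root_.matMul, hterm, tsum_zero]

theorem matPow (hC : IsBanded k C) (l : ℕ) : IsBanded (k * l) (matPow C l) := by
  induction l with
  | zero =>
    intro i j hij
    have hne : i ≠ j := by rintro rfl; simp at hij
    simp [_root_.matPow, hne]
  | succ l ih => rw [Nat.mul_succ]; exact ih.matMul hC

theorem trunc (hC : IsBanded k C) (n : ℕ) : IsBanded k (trunc C n) := by
  intro i j hij
  simp [_root_.trunc, hC i j hij]

theorem matMul_eq_sum_Icc (hD : IsBanded k D) (i j : ℕ) :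
    _root_.matMul C D i j = ∑ p ∈ Icc (j - k) (j + k), C i p * D p j := by
  refine tsum_eq_sum fun p hp => ?_
  have hpj : (k : ℤ) < |(p : ℤ) - j| := by
    rw [mem_Icc] at hp
    rw [lt_abs]
    omega
  rw [hD p j hpj, mul_zero]

end IsBanded

theorem abs_trunc_le {C : ℕ → ℕ → ℝ} {B : ℝ} (hC : ∀ i j, |C i j| ≤ B) (n i j : ℕ) :
    |trunc C n i j| ≤ B := by
  unfold trunc
  split
  · exact hC i j
  · simpa using (abs_nonneg _).trans (hC 0 0)

theorem abs_matMul_le {k : ℕ} {A B : ℝ} {C D : ℕ → ℕ → ℝ} (hC : ∀ i j, |C i j| ≤ A)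
    (hD : IsBanded k D) (hDB : ∀ i j, |D i j| ≤ B) (i j : ℕ) :
    |matMul C D i j| ≤ (2 * k + 1) * (A * B) := by
  have hA : 0 ≤ A := (abs_nonneg _).trans (hC 0 0)
  have hcard : ((Icc (j - k) (j + k)).card : ℝ) ≤ 2 * k + 1 := by
    rw [Nat.card_Icc]
    exact_mod_cast (by omega : j + k + 1 - (j - k) ≤ 2 * k + 1)
  rw [hD.matMul_eq_sum_Icc]
  calc |∑ p ∈ Icc (j - k) (j + k), C i p * D p j|
      ≤ ∑ p ∈ Icc (j - k) (j + k), |C i p * D p j| := abs_sum_le_sum_abs _ _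
    _ ≤ (Icc (j - k) (j + k)).card • (A * B) := by
      refine sum_le_card_nsmul _ _ _ fun p _ => ?_
      rw [abs_mul]
      exact mul_le_mul (hC i p) (hDB p j) (abs_nonneg _) hA
    _ ≤ (2 * k + 1) * (A * B) := by
      rw [nsmul_eq_mul]
      exact mul_le_mul_of_nonneg_right hcard (mul_nonneg hA ((abs_nonneg _).trans (hDB 0 0)))

theorem abs_matPow_le {k : ℕ} {K : ℝ} {C : ℕ → ℕ → ℝ} (hC : IsBanded k C)
    (hK : ∀ i j, |C i j| ≤ K) (l : ℕ) (i j : ℕ) :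
    |matPow C l i j| ≤ ((2 * k + 1) * K) ^ l := by
  induction l generalizing i j with
  | zero =>
    simp only [matPow, pow_zero]
    split <;> simp
  | succ l ih =>
    calc |matMul (matPow C l) C i j| ≤ (2 * k + 1) * (((2 * k + 1) * K) ^ l * K) :=
          abs_matMul_le ih hC hK i j
      _ = ((2 * k + 1) * K) ^ (l + 1) := by ring

theorem matPow_trunc_apply_of_lt {k n : ℕ} {C : ℕ → ℕ → ℝ} (hC : IsBanded k C) (l : ℕ)
    {i j : ℕ} (hi : i + k * (l - 1) < n) (hj : j < n) :
    matPow (trunc C n) l i j = matPow C l i j := by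
  induction l generalizing j with
  | zero => rfl
  | succ l ih =>
    simp only [Nat.add_sub_cancel] at hi
    refine tsum_congr fun p => ?_
    by_cases hp : p < n
    · have hi' : i + k * (l - 1) < n :=
        lt_of_le_of_lt (Nat.add_le_add_left (Nat.mul_le_mul_left k (Nat.sub_le l 1)) i) hi
      rw [ih hi' hp, trunc, if_pos ⟨hp, hj⟩]
    · have hip : ((k * l : ℕ) : ℤ) < |(i : ℤ) - p| := by
        rw [lt_abs]
        omega
      rw [trunc, if_neg (fun h => hp h.1), (hC.matPow l) i p hip, mul_zero, zero_mul]

theorem abs_sum_range_le_of_eq_zero {f : ℕ → ℝ} {m n : ℕ} {B : ℝ}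
    (hzero : ∀ i, i + m < n → f i = 0) (hB : ∀ i, |f i| ≤ B) :
    |∑ i ∈ range n, f i| ≤ m * B := by
  set s := (range n).filter (fun i => n ≤ i + m)
  have hsum : ∑ i ∈ range n, f i = ∑ i ∈ s, f i :=
    (sum_filter_of_ne fun i _ hi => not_lt.mp (mt (hzero i) hi)).symm
  have hcard : (s.card : ℝ) ≤ m := by
    have hsub : s ⊆ Ico (n - m) n := fun i hi => by
      simp only [s, mem_filter, mem_range] at hi
      rw [mem_Ico]
      omega
    have := (card_le_card hsub).trans (by rw [Nat.card_Ico]; omega : (Ico (n - m) n).card ≤ m)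
    exact_mod_cast this
  calc |∑ i ∈ range n, f i| ≤ ∑ i ∈ s, |f i| := hsum ▸ abs_sum_le_sum_abs _ _
    _ ≤ s.card • B := sum_le_card_nsmul _ _ _ fun i _ => hB i
    _ ≤ m * B := by
      rw [nsmul_eq_mul]
      exact mul_le_mul_of_nonneg_right hcard ((abs_nonneg _).trans (hB 0))

theorem abs_tr_matPow_trunc_sub_le {k : ℕ} {K : ℝ} {C : ℕ → ℕ → ℝ} (hC : IsBanded k C)
    (hK : ∀ i j, |C i j| ≤ K) (l n : ℕ) :
    |tr (matPow (trunc C n) l) n - tr (trunc (matPow C l) n) n|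
      ≤ ((k * (l - 1) : ℕ) : ℝ) * (2 * ((2 * k + 1) * K) ^ l) := by
  rw [tr, tr, ← sum_sub_distrib]
  refine abs_sum_range_le_of_eq_zero (fun i hi => ?_) (fun i => ?_)
  · have hin : i < n := by omega
    rw [matPow_trunc_apply_of_lt hC l hi hin, trunc, if_pos ⟨hin, hin⟩, sub_self]
  · have h₁ := abs_matPow_le (hC.trunc n) (abs_trunc_le hK n) l i i
    have h₂ := abs_trunc_le (abs_matPow_le hC hK l) n i i
    linarith [abs_sub (matPow (trunc C n) l i i) (trunc (matPow C l) n i i)]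

theorem two_mul_pow_le_pow {k l : ℕ} (hk : 1 ≤ k) (hl : 2 ≤ l) :
    2 * (2 * k + 1) ^ l ≤ (2 * k * l + 1) ^ l := by
  obtain ⟨m, rfl⟩ := Nat.exists_eq_add_of_le hl
  calc 2 * (2 * k + 1) ^ (2 + m) = 2 * (2 * k + 1) ^ 2 * (2 * k + 1) ^ m := by ring
    _ ≤ (4 * k + 1) ^ 2 * (4 * k + 1) ^ m :=
      Nat.mul_le_mul (by nlinarith) (Nat.pow_le_pow_left (by omega) m)
    _ = (4 * k + 1) ^ (2 + m) := by ring
    _ ≤ (2 * k * (2 + m) + 1) ^ (2 + m) := Nat.pow_le_pow_left (by nlinarith) _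

theorem cast_mul_two_mul_pow_le (k : ℕ) {l : ℕ} (hl : 1 ≤ l) {K : ℝ} (hK : 0 ≤ K) :
    ((k * (l - 1) : ℕ) : ℝ) * (2 * ((2 * k + 1) * K) ^ l)
      ≤ (k : ℝ) * ((l : ℝ) - 1) * ((2 * k * l + 1 : ℕ) : ℝ) ^ l * K ^ l := by
  have hnat : k * (l - 1) * (2 * (2 * k + 1) ^ l) ≤ k * (l - 1) * (2 * k * l + 1) ^ l := by
    rcases Nat.eq_zero_or_pos (k * (l - 1)) with h | h
    · simp [h]
    · have hk : 1 ≤ k := Nat.pos_of_mul_pos_right h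
      have hl' : 2 ≤ l := by have := Nat.pos_of_mul_pos_left h; omega
      exact Nat.mul_le_mul_left _ (two_mul_pow_le_pow hk hl')
  have hreal : ((k * (l - 1) * (2 * (2 * k + 1) ^ l) : ℕ) : ℝ)
      ≤ ((k * (l - 1) * (2 * k * l + 1) ^ l : ℕ) : ℝ) := by exact_mod_cast hnat
  push_cast [Nat.cast_sub hl] at hreal ⊢
  rw [mul_pow]
  nlinarith [pow_nonneg hK l]

/-- Quantitative trace comparison for powers of banded matrices, and the resulting limit. -/
theorem stmt3 (k : ℕ) (K : ℝ) (C : ℕ → ℕ → ℝ)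
    (hband : ∀ i j : ℕ, (k : ℤ) < |(i : ℤ) - (j : ℤ)| → C i j = 0)
    (hbdd : ∀ i j : ℕ, |C i j| ≤ K)
    (l : ℕ) (hl : 1 ≤ l) :
    (∀ n : ℕ, |tr (matPow (trunc C n) l) n - tr (trunc (matPow C l) n) n|
        ≤ (k : ℝ) * ((l : ℝ) - 1) * ((2 * k * l + 1 : ℕ) : ℝ) ^ l * K ^ l) ∧
    Filter.Tendsto
      (fun n : ℕ => (1 / (n : ℝ)) * |tr (matPow (trunc C n) l) n - tr (trunc (matPow C l) n) n|)
      Filter.atTop (nhds 0) := by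
  have hK : 0 ≤ K := (abs_nonneg _).trans (hbdd 0 0)
  have hbound : ∀ n : ℕ, |tr (matPow (trunc C n) l) n - tr (trunc (matPow C l) n) n|
      ≤ (k : ℝ) * ((l : ℝ) - 1) * ((2 * k * l + 1 : ℕ) : ℝ) ^ l * K ^ l := fun n =>
    (abs_tr_matPow_trunc_sub_le hband hbdd l n).trans (cast_mul_two_mul_pow_le k hl hK)
  refine ⟨hbound, squeeze_zero (fun n => by positivity) (fun n => ?_)
    (tendsto_const_div_atTop_nhds_zero_nat ((k : ℝ) * ((l : ℝ) - 1) *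
      ((2 * k * l + 1 : ℕ) : ℝ) ^ l * K ^ l))⟩
  rw [one_div, inv_mul_eq_div]
  exact div_le_div_of_nonneg_right (hbound n) n.cast_nonneg
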